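/- Strict improvement by moving mass to a strictly nearer cluster: let Q be a row-stochastic quantizer, m ∈ Fin M, q ≠ s ∈ Fin K with Q m q = v > 0. Assume at Q each vector p_{XT}(·,h) has positive coordinate sum (and remains so along the transfer), F is differentiable at each p_{XT}(·,h) with partials c_h^n, each g_k is differentiable at p_Z(k) with d_k = g_k'(p_Z(k)), and D(m,s) < D(m,q), where D(m,k) = β · ∑_h ∑_n c_h^n · (p n m) · A k h + d_k · p_{Y_m}. Let Q' equal Q except that Q' m q = 0 and Q' m s = Q m s + v. Then J(Q') < J(Q). -/

import Mathlib

def simplex (N : ℕ) : Set (Fin N → ℝ) := {q | (∀ n, 0 ≤ q n) ∧ ∑ n, q n = 1}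

/-- `f` is concave on the standard probability simplex. -/
def ConcaveOnSimplex {N : ℕ} (f : (Fin N → ℝ) → ℝ) : Prop :=
  ∀ a ∈ simplex N, ∀ b ∈ simplex N, ∀ lam : ℝ, lam ∈ Set.Icc (0:ℝ) 1 →
    lam * f a + (1 - lam) * f b ≤ f (lam • a + (1 - lam) • b)

/-- The impurity functional `F(v) = (∑ n, v n) * f (v / ∑ n, v n)`. -/
noncomputable def impurity {N : ℕ} (f : (Fin N → ℝ) → ℝ) (v : Fin N → ℝ) : ℝ :=
  (∑ n, v n) * f (fun n => v n / ∑ m, v m)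

/-- A joint distribution on `Fin N × Fin M`. -/
def IsJointDist {N M : ℕ} (p : Fin N → Fin M → ℝ) : Prop :=
  (∀ n m, 0 ≤ p n m) ∧ ∑ n, ∑ m, p n m = 1

/-- A row-stochastic matrix. -/
def RowStochastic {M K : ℕ} (Q : Fin M → Fin K → ℝ) : Prop :=
  (∀ m k, 0 ≤ Q m k) ∧ ∀ m, ∑ k, Q m k = 1

/-- Marginal of the data `Y`: `p_{Y_m} = ∑ n, p n m`. -/
noncomputable def pY {N M : ℕ} (p : Fin N → Fin M → ℝ) (m : Fin M) : ℝ := ∑ n, p n m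

/-- Joint distribution of the source and the quantizer output. -/
noncomputable def pXZ {N M K : ℕ} (p : Fin N → Fin M → ℝ) (Q : Fin M → Fin K → ℝ)
    (n : Fin N) (k : Fin K) : ℝ := ∑ m, p n m * Q m k

/-- Marginal of the quantizer output. -/
noncomputable def pZ {N M K : ℕ} (p : Fin N → Fin M → ℝ) (Q : Fin M → Fin K → ℝ)
    (k : Fin K) : ℝ := ∑ n, pXZ p Q n k

/-- Joint distribution of the source and the channel output. -/
noncomputable def pXT {N M K H : ℕ} (p : Fin N → Fin M → ℝ) (Q : Fin M → Fin K → ℝ)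
    (A : Fin K → Fin H → ℝ) (n : Fin N) (h : Fin H) : ℝ := ∑ k, pXZ p Q n k * A k h

/-- The objective `J(Q) = β ∑_h F(p_{XT}(·,h)) + ∑_k g_k(p_Z(k))`. -/
noncomputable def J {N M K H : ℕ} (β : ℝ) (f : (Fin N → ℝ) → ℝ) (g : Fin K → ℝ → ℝ)
    (p : Fin N → Fin M → ℝ) (A : Fin K → Fin H → ℝ) (Q : Fin M → Fin K → ℝ) : ℝ :=
  β * ∑ h, impurity f (fun n => pXT p Q A n h) + ∑ k, g k (pZ p Q k)

/-- A deterministic (hard) quantizer. -/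
def Deterministic {M K : ℕ} (Q : Fin M → Fin K → ℝ) : Prop :=
  ∀ m, ∃ k, Q m k = 1 ∧ ∀ k', k' ≠ k → Q m k' = 0

/-!
Along the segment `t ↦ Q + t • R`, where `R` moves the mass `v` of row `m` from column `q` to
column `s`, the objective is concave: `F` is the perspective of the concave `f`, hence concave on
vectors of positive mass, `Q ↦ p_{XT}` and `Q ↦ p_Z` are linear, and the `g_k` are concave.
Its derivative at `t = 0` is `v (D(m,s) - D(m,q)) < 0`, and a concave function on `[0, 1]` lies
below its tangent at `0`, so `J(Q') = J(Q + R) ≤ J(Q) + v (D(m,s) - D(m,q)) < J(Q)`.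
-/

open Finset

section Linearity

variable {N M K H : ℕ} (p : Fin N → Fin M → ℝ) (A : Fin K → Fin H → ℝ)

lemma pXZ_smul_add_smul (Q R : Fin M → Fin K → ℝ) (a b : ℝ) (n : Fin N) (k : Fin K) :
    pXZ p (a • Q + b • R) n k = a * pXZ p Q n k + b * pXZ p R n k := by
  simp only [pXZ, Pi.add_apply, Pi.smul_apply, smul_eq_mul, mul_sum, ← sum_add_distrib]
  exact sum_congr rfl fun _ _ => by ring

lemma pZ_smul_add_smul (Q R : Fin M → Fin K → ℝ) (a b : ℝ) (k : Fin K) :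
    pZ p (a • Q + b • R) k = a * pZ p Q k + b * pZ p R k := by
  simp only [pZ, pXZ_smul_add_smul, sum_add_distrib, mul_sum]

lemma pXT_smul_add_smul (Q R : Fin M → Fin K → ℝ) (a b : ℝ) (n : Fin N) (h : Fin H) :
    pXT p (a • Q + b • R) A n h = a * pXT p Q A n h + b * pXT p R A n h := by
  simp only [pXT, pXZ_smul_add_smul, add_mul, sum_add_distrib, mul_sum, mul_assoc]

lemma pXT_add_smul (Q R : Fin M → Fin K → ℝ) (t : ℝ) (n : Fin N) (h : Fin H) :
    pXT p (Q + t • R) A n h = pXT p Q A n h + t * pXT p R A n h := by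
  simpa using pXT_smul_add_smul p A Q R 1 t n h

lemma pZ_add_smul (Q R : Fin M → Fin K → ℝ) (t : ℝ) (k : Fin K) :
    pZ p (Q + t • R) k = pZ p Q k + t * pZ p R k := by
  simpa using pZ_smul_add_smul p Q R 1 t k

lemma pXZ_single (m : Fin M) (r : Fin K → ℝ) (n : Fin N) (k : Fin K) :
    pXZ p (Pi.single m r) n k = p n m * r k := by
  simp [pXZ, Pi.single_apply, ite_apply]

lemma pXT_single (m : Fin M) (r : Fin K → ℝ) (n : Fin N) (h : Fin H) :
    pXT p (Pi.single m r) A n h = p n m * ∑ k, r k * A k h := by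
  simp [pXT, pXZ_single, mul_sum, mul_assoc]

lemma pZ_single (m : Fin M) (r : Fin K → ℝ) (k : Fin K) :
    pZ p (Pi.single m r) k = pY p m * r k := by
  simp [pZ, pXZ_single, pY, sum_mul]

lemma pXT_nonneg (hp : ∀ n m, 0 ≤ p n m) (hA : ∀ k h, 0 ≤ A k h) {Q : Fin M → Fin K → ℝ}
    (hQ : 0 ≤ Q) (n : Fin N) (h : Fin H) : 0 ≤ pXT p Q A n h :=
  sum_nonneg fun k _ => mul_nonneg (sum_nonneg fun m _ => mul_nonneg (hp n m) (hQ m k)) (hA k h)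

end Linearity

section Concavity

variable {N M K H : ℕ}

def massCone (N : ℕ) : Set (Fin N → ℝ) := {x | 0 ≤ x ∧ 0 < ∑ n, x n}

lemma convex_massCone : Convex ℝ (massCone N) := by
  intro x hx y hy a b ha hb hab
  refine ⟨convex_Ici (0 : Fin N → ℝ) hx.1 hy.1 ha hb hab, ?_⟩
  simpa [sum_add_distrib, mul_sum] using convex_Ioi (0 : ℝ) hx.2 hy.2 ha hb hab

/-- `impurity f` is the perspective of `f`, so it inherits concavity from `f`. -/
lemma ConcaveOnSimplex.concaveOn_impurity {f : (Fin N → ℝ) → ℝ} (hf : ConcaveOnSimplex f) :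
    ConcaveOn ℝ (massCone N) (impurity f) := by
  refine ⟨convex_massCone, fun x hx y hy a b ha hb hab => ?_⟩
  set Sx := ∑ n, x n
  set Sy := ∑ n, y n
  set S := a * Sx + b * Sy with hSdef
  have hSx : Sx ≠ 0 := hx.2.ne'
  have hSy : Sy ≠ 0 := hy.2.ne'
  have hS : ∑ n, (a • x + b • y) n = S := by simp [S, Sx, Sy, sum_add_distrib, mul_sum]
  have hSpos : 0 < S := hS ▸ (convex_massCone hx hy ha hb hab).2
  have hsimplex : ∀ z ∈ massCone N, (fun n => z n / ∑ n, z n) ∈ simplex N := fun z hz =>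
    ⟨fun n => div_nonneg (hz.1 n) hz.2.le, by rw [← sum_div, div_self hz.2.ne']⟩
  set μ := a * Sx / S
  have hμ : μ ∈ Set.Icc (0 : ℝ) 1 :=
    ⟨div_nonneg (mul_nonneg ha hx.2.le) hSpos.le, (div_le_one hSpos).2 (by nlinarith [hy.2])⟩
  have h1μ : 1 - μ = b * Sy / S := by
    rw [eq_div_iff hSpos.ne', sub_mul, div_mul_cancel₀ _ hSpos.ne']
    linarith
  have hcombo : μ • (fun n => x n / Sx) + (1 - μ) • (fun n => y n / Sy) =
      fun n => (a • x + b • y) n / ∑ m, (a • x + b • y) m := by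
    rw [h1μ, hS]
    funext n
    simp only [μ, Pi.add_apply, Pi.smul_apply, smul_eq_mul]
    field_simp
  have key := hf _ (hsimplex x hx) _ (hsimplex y hy) μ hμ
  rw [hcombo] at key
  calc a • impurity f x + b • impurity f y
      = S * (μ * f (fun n => x n / Sx) + (1 - μ) * f (fun n => y n / Sy)) := by
        rw [h1μ]; simp only [impurity, smul_eq_mul, μ]; field_simp; rfl
    _ ≤ S * f (fun n => (a • x + b • y) n / ∑ m, (a • x + b • y) m) :=
        mul_le_mul_of_nonneg_left key hSpos.le
    _ = impurity f (a • x + b • y) := by rw [impurity, hS]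

lemma ConcaveOn.comp_add_smul {E : Type*} [AddCommGroup E] [Module ℝ E] {s : Set E} {F : E → ℝ}
    (hF : ConcaveOn ℝ s F) (x y : E) :
    ConcaveOn ℝ {t : ℝ | x + t • y ∈ s} (fun t => F (x + t • y)) := by
  have hline : ∀ t : ℝ, AffineMap.lineMap x (x + y) t = x + t • y := fun t => by
    rw [AffineMap.lineMap_apply_module', add_sub_cancel_left, add_comm]
  simpa [Function.comp_def, hline, Set.preimage] using
    hF.comp_affineMap (AffineMap.lineMap x (x + y))

def nondegQuantizers (p : Fin N → Fin M → ℝ) (A : Fin K → Fin H → ℝ) :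
    Set (Fin M → Fin K → ℝ) :=
  {Q | ∀ h, (fun n => pXT p Q A n h) ∈ massCone N}

lemma concaveOn_J {β : ℝ} (hβ : 0 ≤ β) {f : (Fin N → ℝ) → ℝ} (hf : ConcaveOnSimplex f)
    {g : Fin K → ℝ → ℝ} (hg : ∀ k, ConcaveOn ℝ Set.univ (g k))
    (p : Fin N → Fin M → ℝ) (A : Fin K → Fin H → ℝ) :
    ConcaveOn ℝ (nondegQuantizers p A) (J β f g p A) := by
  have hcombo : ∀ Q₁ Q₂ a b h, (fun n => pXT p (a • Q₁ + b • Q₂) A n h) =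
      a • (fun n => pXT p Q₁ A n h) + b • (fun n => pXT p Q₂ A n h) := fun _ _ _ _ _ =>
    funext fun _ => pXT_smul_add_smul ..
  refine ⟨fun Q₁ hQ₁ Q₂ hQ₂ a b ha hb hab h => ?_, fun Q₁ hQ₁ Q₂ hQ₂ a b ha hb hab => ?_⟩
  · rw [hcombo]
    exact convex_massCone (hQ₁ h) (hQ₂ h) ha hb hab
  have hF : a * ∑ h, impurity f (fun n => pXT p Q₁ A n h) +
      b * ∑ h, impurity f (fun n => pXT p Q₂ A n h) ≤
      ∑ h, impurity f (fun n => pXT p (a • Q₁ + b • Q₂) A n h) := by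
    rw [mul_sum, mul_sum, ← sum_add_distrib]
    refine sum_le_sum fun h _ => ?_
    rw [hcombo]
    exact hf.concaveOn_impurity.2 (hQ₁ h) (hQ₂ h) ha hb hab
  have hG : a * ∑ k, g k (pZ p Q₁ k) + b * ∑ k, g k (pZ p Q₂ k) ≤
      ∑ k, g k (pZ p (a • Q₁ + b • Q₂) k) := by
    rw [mul_sum, mul_sum, ← sum_add_distrib]
    refine sum_le_sum fun k _ => ?_
    rw [pZ_smul_add_smul]
    exact (hg k).2 (Set.mem_univ _) (Set.mem_univ _) ha hb hab
  simp only [J, smul_eq_mul]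
  nlinarith [mul_le_mul_of_nonneg_left hF hβ]

end Concavity

section Derivative

variable {N M K H : ℕ}

lemma hasDerivAt_J_add_smul (β : ℝ) {f : (Fin N → ℝ) → ℝ} {g : Fin K → ℝ → ℝ}
    {p : Fin N → Fin M → ℝ} {A : Fin K → Fin H → ℝ} {Q : Fin M → Fin K → ℝ}
    {Dh : Fin H → ((Fin N → ℝ) →L[ℝ] ℝ)} {d : Fin K → ℝ}
    (hFd : ∀ h, HasFDerivAt (impurity f) (Dh h) (fun n => pXT p Q A n h))
    (hgd : ∀ k, HasDerivAt (g k) (d k) (pZ p Q k)) (R : Fin M → Fin K → ℝ) :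
    HasDerivAt (fun t : ℝ => J β f g p A (Q + t • R))
      (β * ∑ h, Dh h (fun n => pXT p R A n h) + ∑ k, d k * pZ p R k) 0 := by
  have hJ : (fun t : ℝ => J β f g p A (Q + t • R)) = fun t =>
      β * ∑ h, impurity f ((fun n => pXT p Q A n h) + t • fun n => pXT p R A n h) +
        ∑ k, g k (pZ p Q k + t * pZ p R k) := by
    funext t
    simp only [J, pXT_add_smul, pZ_add_smul]
    rfl
  have hF : ∀ h, HasDerivAt
      (fun t : ℝ => impurity f ((fun n => pXT p Q A n h) + t • fun n => pXT p R A n h))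
      (Dh h (fun n => pXT p R A n h)) 0 := fun h => by
    simpa [Function.comp_def] using (hFd h).comp_hasDerivAt_of_eq (0 : ℝ)
      (((hasDerivAt_id (0 : ℝ)).smul_const _).const_add (fun n => pXT p Q A n h)) (by simp)
  have hG : ∀ k, HasDerivAt (fun t : ℝ => g k (pZ p Q k + t * pZ p R k)) (d k * pZ p R k) 0 :=
    fun k => by
      simpa [Function.comp_def] using (hgd k).comp_of_eq (0 : ℝ)
        (((hasDerivAt_id (0 : ℝ)).mul_const (pZ p R k)).const_add (pZ p Q k)) (by simp)
  rw [hJ]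
  exact ((HasDerivAt.fun_sum fun h _ => hF h).const_mul β).add
    (HasDerivAt.fun_sum fun k _ => hG k)

lemma ContinuousLinearMap.apply_eq_sum_mul_apply_single {ι : Type*} [Fintype ι] [DecidableEq ι]
    (L : (ι → ℝ) →L[ℝ] ℝ) (x : ι → ℝ) : L x = ∑ i, x i * L (Pi.single i 1) := by
  conv_lhs => rw [pi_eq_sum_univ' x]
  simp [map_sum]

end Derivative

section MassTransfer

variable {N M K H : ℕ}

def massTransfer (m : Fin M) (q s : Fin K) (v : ℝ) : Fin M → Fin K → ℝ :=
  Pi.single m (v • (Pi.single s 1 - Pi.single q 1))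

/-- The paper's `D(m, k)`. -/
noncomputable def clusterCost (β : ℝ) (c : Fin H → Fin N → ℝ) (d : Fin K → ℝ)
    (p : Fin N → Fin M → ℝ) (A : Fin K → Fin H → ℝ) (m : Fin M) (k : Fin K) : ℝ :=
  β * ∑ h, ∑ n, c h n * p n m * A k h + d k * pY p m

lemma update_eq_add_massTransfer {Q : Fin M → Fin K → ℝ} {m : Fin M} {q s : Fin K} {v : ℝ}
    (hqs : q ≠ s) (hQmq : Q m q = v) :
    (fun m' k' => if m' = m then
        (if k' = q then 0 else if k' = s then Q m s + v else Q m' k') else Q m' k') =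
      Q + massTransfer m q s v := by
  funext m' k'
  by_cases hm : m' = m
  · subst hm
    by_cases hq : k' = q
    · subst hq; simp [massTransfer, hqs, hQmq]
    · by_cases hs : k' = s
      · subst hs; simp [massTransfer, hq]
      · simp [massTransfer, hq, hs]
  · simp [massTransfer, hm]

lemma add_smul_massTransfer_nonneg {Q : Fin M → Fin K → ℝ} (hQ : 0 ≤ Q) {m : Fin M} {q s : Fin K}
    {v : ℝ} (hv : 0 ≤ v) (hvQ : v ≤ Q m q) {t : ℝ} (ht : t ∈ Set.Icc (0 : ℝ) 1) :
    0 ≤ Q + t • massTransfer m q s v := by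
  intro m' k'
  by_cases hm : m' = m
  · subst hm
    have hQ' : 0 ≤ Q m' k' := hQ m' k'
    simp only [massTransfer, Pi.add_apply, Pi.smul_apply, Pi.single_eq_same, Pi.sub_apply,
      Pi.single_apply, smul_eq_mul, Pi.zero_apply]
    split_ifs with hs hq hq <;> (try subst hq) <;> nlinarith [ht.1, ht.2, mul_nonneg ht.1 hv]
  · simpa [massTransfer, hm] using hQ m' k'

lemma sum_smul_single_sub_single_mul (v : ℝ) (r : Fin K → ℝ) (q s : Fin K) :
    ∑ k, (v • (Pi.single s 1 - Pi.single q 1) : Fin K → ℝ) k * r k = v * (r s - r q) := by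
  simp [sub_mul, mul_sub, sum_sub_distrib, Pi.single_apply]

lemma pXT_massTransfer (p : Fin N → Fin M → ℝ) (A : Fin K → Fin H → ℝ) (m : Fin M) (q s : Fin K)
    (v : ℝ) (n : Fin N) (h : Fin H) :
    pXT p (massTransfer m q s v) A n h = v * p n m * (A s h - A q h) := by
  rw [massTransfer, pXT_single, sum_smul_single_sub_single_mul]
  ring

lemma sum_mul_pZ_massTransfer (p : Fin N → Fin M → ℝ) (d : Fin K → ℝ) (m : Fin M) (q s : Fin K)
    (v : ℝ) : ∑ k, d k * pZ p (massTransfer m q s v) k = v * pY p m * (d s - d q) := by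
  simp only [massTransfer, pZ_single]
  rw [mul_comm v, mul_assoc, ← sum_smul_single_sub_single_mul, mul_sum]
  exact sum_congr rfl fun _ _ => by ring

lemma J_directionalDeriv_massTransfer (β : ℝ) {Dh : Fin H → ((Fin N → ℝ) →L[ℝ] ℝ)}
    {c : Fin H → Fin N → ℝ} (hc : ∀ h n, Dh h (Pi.single n 1) = c h n) (d : Fin K → ℝ)
    (p : Fin N → Fin M → ℝ) (A : Fin K → Fin H → ℝ) (m : Fin M) (q s : Fin K) (v : ℝ) :
    β * ∑ h, Dh h (fun n => pXT p (massTransfer m q s v) A n h) +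
        ∑ k, d k * pZ p (massTransfer m q s v) k =
      v * (clusterCost β c d p A m s - clusterCost β c d p A m q) := by
  have hF : ∀ h, Dh h (fun n => pXT p (massTransfer m q s v) A n h) =
      v * (∑ n, c h n * p n m * A s h - ∑ n, c h n * p n m * A q h) := fun h => by
    rw [ContinuousLinearMap.apply_eq_sum_mul_apply_single, ← sum_sub_distrib, mul_sum]
    exact sum_congr rfl fun n _ => by rw [hc, pXT_massTransfer]; ring
  rw [sum_congr rfl fun h _ => hF h, sum_mul_pZ_massTransfer, clusterCost, clusterCost,
    ← mul_sum, sum_sub_distrib]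
  ring

end MassTransfer

/-- Strict improvement by moving mass to a strictly nearer cluster. -/
theorem stmt_7 {N M K H : ℕ}
    (β : ℝ) (hβ : 0 < β)
    (p : Fin N → Fin M → ℝ) (hp : IsJointDist p)
    (A : Fin K → Fin H → ℝ) (hA : RowStochastic A)
    (f : (Fin N → ℝ) → ℝ) (hf : ConcaveOnSimplex f)
    (g : Fin K → ℝ → ℝ) (hg : ∀ k, ConcaveOn ℝ Set.univ (g k))
    (Q : Fin M → Fin K → ℝ) (hQ : RowStochastic Q)
    (m : Fin M) (q s : Fin K) (hqs : q ≠ s)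
    (v : ℝ) (hv : 0 < v) (hQmq : Q m q = v)
    (hpos : ∀ t ∈ Set.Icc (0:ℝ) 1, ∀ h,
      0 < ∑ n, (pXT p Q A n h + t * (v * p n m * (A s h - A q h))))
    (Dh : Fin H → ((Fin N → ℝ) →L[ℝ] ℝ))
    (hFd : ∀ h, HasFDerivAt (impurity f) (Dh h) (fun n => pXT p Q A n h))
    (c : Fin H → Fin N → ℝ) (hc : ∀ h n, Dh h (Pi.single n 1) = c h n)
    (d : Fin K → ℝ) (hgd : ∀ k, HasDerivAt (g k) (d k) (pZ p Q k))
    (hnear : β * ∑ h, ∑ n, c h n * p n m * A s h + d s * pY p m <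
             β * ∑ h, ∑ n, c h n * p n m * A q h + d q * pY p m) :
    J β f g p A (fun m' k' => if m' = m then
        (if k' = q then 0 else if k' = s then Q m s + v else Q m' k')
      else Q m' k') < J β f g p A Q := by
  rw [update_eq_add_massTransfer hqs hQmq]
  set R := massTransfer m q s v
  have hpath : Set.Icc (0 : ℝ) 1 ⊆ {t | Q + t • R ∈ nondegQuantizers p A} := fun t ht h =>
    ⟨fun n => pXT_nonneg p A hp.1 hA.1
        (add_smul_massTransfer_nonneg (fun m k => hQ.1 m k) hv.le hQmq.ge ht) n h,
      by simpa only [pXT_add_smul, R, pXT_massTransfer] using hpos t ht h⟩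
  have hconc := ((concaveOn_J hβ.le hf hg p A).comp_add_smul Q R).subset hpath (convex_Icc 0 1)
  have hderiv := hasDerivAt_J_add_smul β hFd hgd R
  rw [J_directionalDeriv_massTransfer β hc] at hderiv
  have hslope := hconc.slope_le_of_hasDerivAt (by simp) (by simp) zero_lt_one hderiv
  have hdesc : v * (clusterCost β c d p A m s - clusterCost β c d p A m q) < 0 :=
    mul_neg_of_pos_of_neg hv (sub_neg.2 hnear)
  simp only [slope_def_field, one_smul, zero_smul, add_zero, sub_zero, div_one] at hslope
  linarith
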